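/- With W nonnegative row-stochastic irreducible, left Perron eigenvector αᵀ (αᵀ𝟙 = 1), T = diag(p₁,...,pₙ) with 0 < pᵢ ≤ 1, and H(σ) = σ(I − (I−σT)W)⁻¹T, one has H(σ) = 𝟙 αᵀT/(αᵀT𝟙) + O(σ) as σ → 0⁺; i.e., there exist M, σ̄ > 0 with ‖H(σ) − 𝟙 αᵀT/(αᵀT𝟙)‖ ≤ M σ for all σ ∈ (0, σ̄]. -/

import Mathlib

open Matrix

def MatIrreducible {n : ℕ} (W : Matrix (Fin n) (Fin n) ℝ) : Prop :=
  ∀ i j, ∃ k : ℕ, 0 < (W ^ k) i j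

noncomputable def vecEnorm {n : ℕ} (v : Fin n → ℝ) : ℝ :=
  Real.sqrt (∑ i, (v i) ^ 2)

noncomputable def opNorm {n : ℕ} (A : Matrix (Fin n) (Fin n) ℝ) : ℝ :=
  sSup {r : ℝ | ∃ x : Fin n → ℝ, vecEnorm x = 1 ∧ r = vecEnorm (A *ᵥ x)}

/-!
Write `A(σ) = (1 - W) + σ T W` for the matrix being inverted. Since `A(σ) 𝟙 = σ p`, applying
`adj A(σ) * A(σ) = det A(σ) • 1` to `𝟙` and pairing with `α` gives `det A(σ) = σ g(σ)` with
`g(σ) = αᵀ adj A(σ) p`. Hence `σ A(σ)⁻¹ = adj A(σ) / g(σ)` for `σ ≠ 0`, and the right side is a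
rational function of `σ`, differentiable at `0` once `g(0) ≠ 0`; this gives the `O(σ)` rate.
By the maximum principle, irreducibility forces `ker (1 - W) = span 𝟙`; with `αᵀ (1 - W) = 0`
this makes `adj (1 - W) = c 𝟙 αᵀ` with `c ≠ 0`, so `g(0) = c αᵀp ≠ 0` and the value at `0`
is `𝟙 αᵀT / αᵀT𝟙`.
-/

open Asymptotics Filter Topology Finset

theorem vecEnorm_le_sum_abs {n : ℕ} (v : Fin n → ℝ) : vecEnorm v ≤ ∑ i, |v i| := by
  refine Real.sqrt_le_iff.2 ⟨by positivity, ?_⟩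
  calc ∑ i, v i ^ 2 = ∑ i, |v i| ^ 2 := by simp only [sq_abs]
    _ ≤ (∑ i, |v i|) ^ 2 := sum_sq_le_sq_sum_of_nonneg fun i _ => abs_nonneg (v i)

theorem abs_le_vecEnorm {n : ℕ} (v : Fin n → ℝ) (i : Fin n) : |v i| ≤ vecEnorm v :=
  Real.abs_le_sqrt (single_le_sum (fun j _ => sq_nonneg (v j)) (mem_univ i))

theorem opNorm_nonneg {n : ℕ} (A : Matrix (Fin n) (Fin n) ℝ) : 0 ≤ opNorm A :=
  Real.sSup_nonneg fun _ ⟨_, _, hr⟩ => hr ▸ Real.sqrt_nonneg _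

theorem opNorm_le_sum_abs {n : ℕ} (A : Matrix (Fin n) (Fin n) ℝ) :
    opNorm A ≤ ∑ i, ∑ j, |A i j| := by
  refine Real.sSup_le ?_ (by positivity)
  rintro _ ⟨x, hx, rfl⟩
  calc vecEnorm (A *ᵥ x) ≤ ∑ i, |(A *ᵥ x) i| := vecEnorm_le_sum_abs _
    _ ≤ ∑ i, ∑ j, |A i j| * |x j| := by
        gcongr with i
        simpa only [mulVec, dotProduct, abs_mul] using
          abs_sum_le_sum_abs (fun j => A i j * x j) univ
    _ ≤ ∑ i, ∑ j, |A i j| := by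
        gcongr with i _ j
        exact mul_le_of_le_one_right (abs_nonneg _) (hx ▸ abs_le_vecEnorm x j)

theorem isBigO_opNorm_of_forall_apply {α F : Type*} [Norm F] {l : Filter α} {g : α → F}
    {n : ℕ} {A : α → Matrix (Fin n) (Fin n) ℝ} (h : ∀ i j, (fun x => A x i j) =O[l] g) :
    (fun x => opNorm (A x)) =O[l] g := by
  have hsum : (fun x => ∑ i, ∑ j, |A x i j|) =O[l] g :=
    IsBigO.fun_sum fun i _ => IsBigO.fun_sum fun j _ => (h i j).abs_left
  refine (isBigO_of_le l fun x => ?_).trans hsum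
  rw [Real.norm_of_nonneg (opNorm_nonneg _), Real.norm_of_nonneg (by positivity)]
  exact opNorm_le_sum_abs _

theorem exists_le_mul_of_isBigO_nhdsGT {f : ℝ → ℝ} (h : f =O[𝓝[>] 0] fun x => x) :
    ∃ M > (0 : ℝ), ∃ δ > (0 : ℝ), ∀ x, 0 < x → x ≤ δ → f x ≤ M * x := by
  obtain ⟨M, hM, hf⟩ := h.exists_pos
  obtain ⟨δ, hδ, hsub⟩ := mem_nhdsGT_iff_exists_Ioc_subset.1 hf.bound
  refine ⟨M, hM, δ, hδ, fun x hx hxδ => ?_⟩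
  have := hsub ⟨hx, hxδ⟩
  simp only [Set.mem_ofPred_eq, Real.norm_eq_abs, abs_of_pos hx] at this
  exact (le_abs_self _).trans this

theorem MatIrreducible.apply_eq_of_mulVec_eq_self {n : ℕ} {W : Matrix (Fin n) (Fin n) ℝ}
    (hirr : MatIrreducible W) (hW : W ∈ rowStochastic ℝ (Fin n)) {v : Fin n → ℝ}
    (hv : W *ᵥ v = v) (i j : Fin n) : v i = v j := by
  have : Nonempty (Fin n) := ⟨i⟩
  obtain ⟨m, hm⟩ := Finite.exists_max v
  suffices h : ∀ j, v j = v m by rw [h i, h j]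
  have hvk : ∀ k, (W ^ k) *ᵥ v = v := fun k => by
    induction k with
    | zero => simp
    | succ k ih => rw [pow_succ, ← mulVec_mulVec, hv, ih]
  intro j
  obtain ⟨k, hk⟩ := hirr m j
  have hWk : W ^ k ∈ rowStochastic ℝ (Fin n) := pow_mem hW k
  -- `v m` is an average of the `v l` with weights `(W ^ k) m l`, none of which exceeds `v m`.
  have hsum : ∑ l, (W ^ k) m l * (v m - v l) = 0 := by
    have hrow := sum_row_of_mem_rowStochastic hWk m
    have hm' : ∑ l, (W ^ k) m l * v l = v m := congrFun (hvk k) m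
    simp only [mul_sub, sum_sub_distrib, ← sum_mul, hrow, one_mul, hm', sub_self]
  have hterm := (sum_eq_zero_iff_of_nonneg fun l _ =>
    mul_nonneg (nonneg_of_mem_rowStochastic hWk) (sub_nonneg.2 (hm l))).1 hsum j (mem_univ j)
  linarith [(mul_eq_zero.1 hterm).resolve_left hk.ne']

section Adjugate

variable {K ι : Type*} [Field K] [Fintype ι] [DecidableEq ι]

theorem Matrix.adjugate_apply_ne_zero_of_ker_const {B : Matrix ι ι K}
    (hker : ∀ v, B *ᵥ v = 0 → ∀ i j, v i = v j) {α : ι → K} (hα : α ᵥ* B = 0)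
    {j : ι} (hαj : α j ≠ 0) (i : ι) : B.adjugate i j ≠ 0 := by
  rw [adjugate_apply]
  intro hdet
  obtain ⟨v, hv0, hv⟩ := exists_mulVec_eq_zero_iff.2 hdet
  have hrow : ∀ k, k ≠ j → (B *ᵥ v) k = 0 := fun k hk => by
    simpa only [mulVec, updateRow_ne hk, Pi.zero_apply] using congrFun hv k
  have hvi : v i = 0 := by
    simpa [mulVec, dotProduct, Pi.single_apply] using congrFun hv j
  -- `α` is orthogonal to the range of `B`, and `B *ᵥ v` is supported at `j`, where `α j ≠ 0`.
  have hrowj : (B *ᵥ v) j = 0 := by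
    have h : α ⬝ᵥ (B *ᵥ v) = 0 := by rw [dotProduct_mulVec, hα, zero_dotProduct]
    rw [dotProduct, sum_eq_single j (fun k _ hk => by rw [hrow k hk, mul_zero])
      (fun h => absurd (mem_univ j) h)] at h
    exact (mul_eq_zero.1 h).resolve_left hαj
  have hBv : B *ᵥ v = 0 := funext fun k => by
    by_cases hk : k = j
    · rw [hk, hrowj]; rfl
    · exact hrow k hk
  exact hv0 (funext fun k => by rw [hker v hBv k i, hvi]; rfl)

theorem Matrix.eq_smul_of_vecMul_eq_zero_of_ker_const {B : Matrix ι ι K}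
    (hker : ∀ v, B *ᵥ v = 0 → ∀ i j, v i = v j) {α : ι → K} (hα : α ᵥ* B = 0)
    {j : ι} (hαj : α j ≠ 0) {w : ι → K} (hw : w ᵥ* B = 0) : w = (w j / α j) • α := by
  set w' := w - (w j / α j) • α with hw'
  have hw'j : w' j = 0 := by simp [hw', div_mul_cancel₀ _ hαj]
  -- `w'` is killed by `B` and vanishes at `j`, so it is also killed by `B` with row `j` replaced.
  have hw'M : w' ᵥ* B.updateRow j (Pi.single j 1) = 0 := by
    have hw'B : w' ᵥ* B = 0 := by rw [hw', sub_vecMul, smul_vecMul, hw, hα, smul_zero, sub_zero]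
    refine funext fun l => (Eq.trans ?_ (congrFun hw'B l))
    refine sum_congr rfl fun k _ => ?_
    by_cases hk : k = j
    · rw [hk, hw'j, zero_mul, zero_mul]
    · simp only [updateRow_ne hk]
  have hdet : (B.updateRow j (Pi.single j 1)).det ≠ 0 := by
    rw [← adjugate_apply]
    exact adjugate_apply_ne_zero_of_ker_const hker hα hαj j
  by_contra hne
  exact hdet (exists_vecMul_eq_zero_iff.1 ⟨w', sub_ne_zero.2 hne, hw'M⟩)

theorem Matrix.exists_adjugate_eq_smul_vecMulVec_of_ker_const {B : Matrix ι ι K}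
    (hB1 : B *ᵥ 1 = 0) (hker : ∀ v, B *ᵥ v = 0 → ∀ i j, v i = v j) {α : ι → K}
    (hα : α ᵥ* B = 0) (hα0 : α ≠ 0) : ∃ c : K, c ≠ 0 ∧ B.adjugate = c • vecMulVec 1 α := by
  obtain ⟨j, hαj⟩ : ∃ j, α j ≠ 0 := Function.ne_iff.1 hα0
  have : Nonempty ι := ⟨j⟩
  have hdet : B.det = 0 := exists_mulVec_eq_zero_iff.1 ⟨1, one_ne_zero, hB1⟩
  have hcol : ∀ i l, B.adjugate i l = B.adjugate j l := fun i l => by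
    refine hker (fun k => B.adjugate k l) (funext fun r => ?_) i j
    simpa [mul_apply, mulVec, dotProduct, hdet] using congrFun (congrFun (mul_adjugate B) r) l
  have hrow : B.adjugate j ᵥ* B = 0 := funext fun l => by
    simpa [mul_apply, vecMul, dotProduct, hdet] using congrFun (congrFun (adjugate_mul B) j) l
  have hrowα := eq_smul_of_vecMul_eq_zero_of_ker_const hker hα hαj hrow
  refine ⟨B.adjugate j j / α j, div_ne_zero (adjugate_apply_ne_zero_of_ker_const hker hα hαj j) hαj,
    ext fun i l => ?_⟩
  rw [hcol i l, congrFun hrowα l]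
  simp

end Adjugate

theorem MatIrreducible.exists_adjugate_one_sub_eq {n : ℕ} {W : Matrix (Fin n) (Fin n) ℝ}
    (hirr : MatIrreducible W) (hW : W ∈ rowStochastic ℝ (Fin n)) {α : Fin n → ℝ}
    (hα : α ᵥ* W = α) (hα0 : α ≠ 0) :
    ∃ c : ℝ, c ≠ 0 ∧ (1 - W).adjugate = c • vecMulVec 1 α := by
  refine exists_adjugate_eq_smul_vecMulVec_of_ker_const ?_ (fun v hv => ?_) ?_ hα0
  · rw [sub_mulVec, one_mulVec, one_vecMul_of_mem_rowStochastic hW, sub_self]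
  · rw [sub_mulVec, one_mulVec, sub_eq_zero] at hv
    exact hirr.apply_eq_of_mulVec_eq_self hW hv.symm
  · rw [vecMul_sub, vecMul_one, hα, sub_self]

section Pencil

variable {ι : Type*} [Fintype ι] [DecidableEq ι]

theorem Matrix.det_eq_dotProduct_adjugate_mulVec {R : Type*} [CommRing R] (A : Matrix ι ι R)
    {x y v : ι → R} (hAx : A *ᵥ x = y) (hv : v ⬝ᵥ x = 1) :
    A.det = v ⬝ᵥ (A.adjugate *ᵥ y) := by
  rw [← hAx, mulVec_mulVec, adjugate_mul, smul_mulVec, one_mulVec, dotProduct_smul, hv,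
    smul_eq_mul, mul_one]

theorem Matrix.smul_inv_eq_inv_smul_adjugate {K : Type*} [Field K] {A : Matrix ι ι K} {σ g : K}
    (hσ : σ ≠ 0) (hdet : A.det = σ * g) : σ • A⁻¹ = g⁻¹ • A.adjugate := by
  rw [inv_def, hdet, Ring.inverse_eq_inv', smul_smul, mul_inv, ← mul_assoc, mul_inv_cancel₀ hσ,
    one_mul]

variable {𝕜 : Type*} [NontriviallyNormedField 𝕜]

open Polynomial in
theorem Matrix.differentiable_adjugate_add_smul_apply (B C : Matrix ι ι 𝕜) (i j : ι) :
    Differentiable 𝕜 fun σ : 𝕜 => (B + σ • C).adjugate i j := by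
  set P : Matrix ι ι 𝕜[X] := B.map Polynomial.C + (X : 𝕜[X]) • C.map Polynomial.C
  have hP : ∀ σ, (P.adjugate i j).eval σ = (B + σ • C).adjugate i j := fun σ => by
    have hmap : (evalRingHom σ).mapMatrix P = B + σ • C := by
      ext k l
      simp only [P, RingHom.mapMatrix_apply, map_apply, add_apply, smul_apply, smul_eq_mul,
        coe_evalRingHom, eval_add, eval_mul, eval_C, eval_X]
    rw [← hmap, ← RingHom.map_adjugate]
    rfl
  simpa only [hP] using (P.adjugate i j).differentiable

theorem Matrix.isBigO_smul_inv_add_smul_sub_adjugate {B C : Matrix ι ι 𝕜} {q α : ι → 𝕜}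
    (hB : B *ᵥ 1 = 0) (hC : C *ᵥ 1 = q) (hα : α ⬝ᵥ 1 = 1)
    (hg : α ⬝ᵥ (B.adjugate *ᵥ q) ≠ 0) (i j : ι) :
    (fun σ : 𝕜 => (σ • (B + σ • C)⁻¹) i j - B.adjugate i j / α ⬝ᵥ (B.adjugate *ᵥ q))
      =O[𝓝[≠] 0] fun σ => σ := by
  set G : 𝕜 → 𝕜 := fun σ => α ⬝ᵥ ((B + σ • C).adjugate *ᵥ q)
  -- The pencil maps `1` to `σ • q`, so its determinant has the explicit factor `σ`.
  have hdet : ∀ σ, (B + σ • C).det = σ * G σ := fun σ => by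
    have hAx : (B + σ • C) *ᵥ 1 = σ • q := by rw [add_mulVec, hB, smul_mulVec, hC, zero_add]
    rw [det_eq_dotProduct_adjugate_mulVec _ hAx hα, mulVec_smul, dotProduct_smul, smul_eq_mul]
  have hG : Differentiable 𝕜 G := by
    have hadj := differentiable_adjugate_add_smul_apply B C
    simp only [G, dotProduct, mulVec]
    fun_prop
  have hG0 : G 0 = α ⬝ᵥ (B.adjugate *ᵥ q) := by simp [G]
  set Φ : 𝕜 → 𝕜 := fun σ => (G σ)⁻¹ * (B + σ • C).adjugate i j
  have hΦ : DifferentiableAt 𝕜 Φ 0 :=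
    ((hG 0).inv (hG0 ▸ hg)).mul (differentiable_adjugate_add_smul_apply B C i j 0)
  have hΦ0 : Φ 0 = B.adjugate i j / α ⬝ᵥ (B.adjugate *ᵥ q) := by
    simp [Φ, hG0, div_eq_inv_mul]
  refine (hΦ.isBigO_sub.mono nhdsWithin_le_nhds).congr' ?_ (by simp)
  filter_upwards [self_mem_nhdsWithin] with σ hσ
  rw [smul_inv_eq_inv_smul_adjugate hσ (hdet σ), hΦ0]
  rfl

end Pencil

theorem MatIrreducible.isBigO_smul_inv_one_sub_add_smul_sub {n : ℕ}
    {W : Matrix (Fin n) (Fin n) ℝ} (hirr : MatIrreducible W) (hW : W ∈ rowStochastic ℝ (Fin n))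
    {α p : Fin n → ℝ} (hα : α ᵥ* W = α) (hαsum : ∑ i, α i = 1) (hs : ∑ i, α i * p i ≠ 0)
    (i j : Fin n) :
    (fun σ : ℝ => (σ • (1 - W + σ • (diagonal p * W))⁻¹) i j - α j / ∑ k, α k * p k)
      =O[𝓝[≠] 0] fun σ => σ := by
  have hα0 : α ≠ 0 := by rintro rfl; simp at hαsum
  obtain ⟨c, hc, hadj⟩ := hirr.exists_adjugate_one_sub_eq hW hα hα0
  have hg : α ⬝ᵥ ((1 - W).adjugate *ᵥ p) = c * ∑ k, α k * p k := by
    have hcol : (c • vecMulVec (1 : Fin n → ℝ) α) *ᵥ p = fun _ => c * ∑ k, α k * p k := by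
      ext; simp [mulVec, dotProduct, mul_sum, mul_assoc]
    rw [hadj, hcol, dotProduct, ← sum_mul, hαsum, one_mul]
  have hlim := isBigO_smul_inv_add_smul_sub_adjugate (C := diagonal p * W)
    (by rw [sub_mulVec, one_mulVec, one_vecMul_of_mem_rowStochastic hW, sub_self])
    (by
      rw [← mulVec_mulVec, one_vecMul_of_mem_rowStochastic hW]
      ext; simp [mulVec_diagonal])
    (by rw [dotProduct_one, hαsum]) (hg ▸ mul_ne_zero hc hs) i j
  rwa [hg, hadj, Matrix.smul_apply, vecMulVec_apply, Pi.one_apply, one_mul, smul_eq_mul,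
    mul_div_mul_left _ _ hc] at hlim

theorem stmt10 {n : ℕ} (W : Matrix (Fin n) (Fin n) ℝ) (p α : Fin n → ℝ)
    (hWnn : ∀ i j, 0 ≤ W i j) (hWrs : ∀ i, ∑ j, W i j = 1)
    (hWirr : MatIrreducible W)
    (hα : α ᵥ* W = α) (hαnn : ∀ i, 0 ≤ α i) (hαsum : ∑ i, α i = 1)
    (hp : ∀ i, 0 < p i ∧ p i ≤ 1) :
    ∃ M > (0 : ℝ), ∃ σbar > (0 : ℝ), ∀ σ : ℝ, 0 < σ → σ ≤ σbar →
      opNorm (σ • (1 - (1 - σ • Matrix.diagonal p) * W)⁻¹ * Matrix.diagonal p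
          - (∑ i, α i * p i)⁻¹ •
            Matrix.vecMulVec (fun _ => (1 : ℝ)) (fun i => α i * p i))
        ≤ M * σ := by
  have hW : W ∈ rowStochastic ℝ (Fin n) := mem_rowStochastic_iff_sum.2 ⟨hWnn, hWrs⟩
  have hs : 0 < ∑ i, α i * p i := by
    obtain ⟨j, -, hj⟩ := exists_lt_of_sum_lt (by simp [hαsum] : ∑ _ : Fin n, (0 : ℝ) < ∑ i, α i)
    exact sum_pos' (fun i _ => mul_nonneg (hαnn i) (hp i).1.le) ⟨j, mem_univ j, mul_pos hj (hp j).1⟩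
  have hlim := hWirr.isBigO_smul_inv_one_sub_add_smul_sub hW hα hαsum hs.ne'
  refine exists_le_mul_of_isBigO_nhdsGT (isBigO_opNorm_of_forall_apply fun i j => ?_)
  refine (((hlim i j).mono (nhdsGT_le_nhdsNE 0)).const_mul_left (p j)).congr'
    (Eventually.of_forall fun σ => ?_) EventuallyEq.rfl
  have hpencil : 1 - (1 - σ • diagonal p) * W = 1 - W + σ • (diagonal p * W) := by
    rw [sub_mul, one_mul, smul_mul_assoc]; abel
  simp only [hpencil, Matrix.sub_apply, mul_diagonal, Matrix.smul_apply, vecMulVec_apply,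
    smul_eq_mul]
  ring
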